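/- Assume the λ_k are not all zero, set L := sup_k λ_k, and suppose c > 0, η > 1 and 1 < α < 1 + (T − L)/((η−1)L). Set δ := (α−1)T − ( (α−1)²(η−1) + (α−1) )·L. Then δ > 0, and for every x ∈ H with x ≠ 0, every b ∈ H, and every real g satisfying ⟨b,x⟩ ≤ g·‖x‖², one has ‖x‖^{-2}⟨x,b⟩ + (1/2)∑_{k≥1} α_k(x)·‖x‖^{-2}⟨x,w_k⟩ + (1/2)∑_{k≥1} β_k(x) + (1/2)∑_{k≥1} ‖x‖^{-2}( ‖σ_k(x)‖² − 2‖x‖^{-2}⟨x,σ_k(x)⟩² ) ≤ g − (δ/2)·c²·‖x‖^{2η−2}. -/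
import Mathlib


open scoped InnerProductSpace

/-- `σ_k(x) = c √λ_k ‖x‖^η (w_k − α‖x‖⁻²⟨x,w_k⟩ x)`. -/
noncomputable def stmt13SigmaK {H : Type*} [NormedAddCommGroup H] [InnerProductSpace ℝ H]
    (w : ℕ → H) (lam : ℕ → ℝ) (c α η : ℝ) (x : H) (k : ℕ) : H :=
  (c * Real.sqrt (lam k) * ‖x‖ ^ η) • (w k - (α * ‖x‖ ^ (-2 : ℝ) * ⟪x, w k⟫_ℝ) • x)

/-- `α_k(x) = c²λ_k(η−α−ηα)‖x‖^{2η−2}⟨x,w_k⟩`. -/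
noncomputable def stmt13AlphaK {H : Type*} [NormedAddCommGroup H] [InnerProductSpace ℝ H]
    (w : ℕ → H) (lam : ℕ → ℝ) (c α η : ℝ) (x : H) (k : ℕ) : ℝ :=
  c ^ 2 * lam k * (η - α - η * α) * ‖x‖ ^ (2 * η - 2) * ⟪x, w k⟫_ℝ

/-- `β_k(x) = c²λ_k‖x‖^{2η−2}((α²η−α(η−2))‖x‖⁻²⟨x,w_k⟩² − α)` (for `‖w_k‖ = 1`). -/
noncomputable def stmt13BetaK {H : Type*} [NormedAddCommGroup H] [InnerProductSpace ℝ H]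
    (w : ℕ → H) (lam : ℕ → ℝ) (c α η : ℝ) (x : H) (k : ℕ) : ℝ :=
  c ^ 2 * lam k * ‖x‖ ^ (2 * η - 2) *
    ((α ^ 2 * η - α * (η - 2)) * ‖x‖ ^ (-2 : ℝ) * ⟪x, w k⟫_ℝ ^ 2 - α)

set_option maxHeartbeats 1000000 in
/-- Assume the `λ_k` are not all zero, `L = sup_k λ_k`, `c > 0`,
`η > 1`, `1 < α < 1 + (T − L)/((η−1)L)` with `T = ∑ λ_k`, and set
`δ = (α−1)T − ((α−1)²(η−1) + (α−1))L`. Then `δ > 0`, and for every `x ≠ 0`,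
`b ∈ H`, and real `g` with `⟨b,x⟩ ≤ g‖x‖²` one has
`‖x‖⁻²⟨x,b⟩ + ½∑_k α_k(x)‖x‖⁻²⟨x,w_k⟩ + ½∑_k β_k(x)
  + ½∑_k ‖x‖⁻²(‖σ_k(x)‖² − 2‖x‖⁻²⟨x,σ_k(x)⟩²) ≤ g − (δ/2)c²‖x‖^{2η−2}`. -/
theorem stmt_13
    {H : Type*} [NormedAddCommGroup H] [InnerProductSpace ℝ H] [CompleteSpace H]
    (w : ℕ → H) (hw : Orthonormal ℝ w)
    (lam : ℕ → ℝ) (hlam : ∀ k, 0 ≤ lam k) (hsum : Summable lam)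
    (hne : ∃ k, lam k ≠ 0)
    (L : ℝ) (hL : IsLUB (Set.range lam) L)
    (c α η : ℝ) (hc : 0 < c) (hη : 1 < η)
    (hα₁ : 1 < α) (hα₂ : α < 1 + ((∑' k, lam k) - L) / ((η - 1) * L)) :
    0 < (α - 1) * (∑' k, lam k) - ((α - 1) ^ 2 * (η - 1) + (α - 1)) * L ∧
    ∀ x : H, x ≠ 0 → ∀ b : H, ∀ g : ℝ, ⟪b, x⟫_ℝ ≤ g * ‖x‖ ^ 2 →
      ‖x‖ ^ (-2 : ℝ) * ⟪x, b⟫_ℝ +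
        (1 / 2) * (∑' k, stmt13AlphaK w lam c α η x k * (‖x‖ ^ (-2 : ℝ) * ⟪x, w k⟫_ℝ)) +
        (1 / 2) * (∑' k, stmt13BetaK w lam c α η x k) +
        (1 / 2) * (∑' k, ‖x‖ ^ (-2 : ℝ) *
          (‖stmt13SigmaK w lam c α η x k‖ ^ 2 -
            2 * ‖x‖ ^ (-2 : ℝ) * ⟪x, stmt13SigmaK w lam c α η x k⟫_ℝ ^ 2)) ≤
      g - ((α - 1) * (∑' k, lam k) - ((α - 1) ^ 2 * (η - 1) + (α - 1)) * L) / 2 *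
        c ^ 2 * ‖x‖ ^ (2 * η - 2) := by
  obtain ⟨k0, hk0⟩ := hne
  have hk0' : 0 < lam k0 := (hlam k0).lt_of_ne (Ne.symm hk0)
  have hlamle : ∀ k, lam k ≤ L := fun k => hL.1 ⟨k, rfl⟩
  have hLpos : 0 < L := lt_of_lt_of_le hk0' (hlamle k0)
  set T := ∑' k, lam k with hT
  have hηL : 0 < (η - 1) * L := mul_pos (by linarith) hLpos
  have hTL : (α - 1) * ((η - 1) * L) < T - L :=
    (lt_div_iff₀ hηL).mp (by linarith)
  have hδ : 0 < (α - 1) * T - ((α - 1) ^ 2 * (η - 1) + (α - 1)) * L := by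
    nlinarith [mul_lt_mul_of_pos_left hTL (sub_pos.mpr hα₁)]
  refine ⟨hδ, ?_⟩
  intro x hx b g hg
  have hn : (0 : ℝ) < ‖x‖ := norm_pos_iff.mpr hx
  have hn2 : (0 : ℝ) < ‖x‖ ^ 2 := by positivity
  have hn2ne : (‖x‖ : ℝ) ^ 2 ≠ 0 := ne_of_gt hn2
  set P : ℝ := ‖x‖ ^ (2 * η - 2) with hPdef
  have hN2eq : ‖x‖ ^ (-2 : ℝ) = ((‖x‖ : ℝ) ^ 2)⁻¹ := by
    rw [show (-2 : ℝ) = ((-2 : ℤ) : ℝ) by norm_num, Real.rpow_intCast]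
    simp [zpow_neg]
  have hPn : (‖x‖ ^ η) ^ 2 = P * ‖x‖ ^ 2 := by
    rw [← Real.rpow_natCast (‖x‖ ^ η) 2, ← Real.rpow_mul hn.le, hPdef,
      ← Real.rpow_natCast ‖x‖ 2, ← Real.rpow_add hn]
    have h2 : η * ((2:ℕ):ℝ) = 2 * η - 2 + ((2:ℕ):ℝ) := by push_cast; ring
    rw [h2]
  -- Bessel
  have hbsum : Summable (fun k => ⟪x, w k⟫_ℝ ^ 2) := by
    have h1 := hw.inner_products_summable (x := x)
    simpa only [real_inner_comm, Real.norm_eq_abs, sq_abs] using h1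
  have hble : (∑' k, ⟪x, w k⟫_ℝ ^ 2) ≤ ‖x‖ ^ 2 := by
    have h2 := hw.tsum_inner_products_le (x := x)
    simpa only [real_inner_comm, Real.norm_eq_abs, sq_abs] using h2
  have hqsum : Summable (fun k => lam k * (((‖x‖ : ℝ) ^ 2)⁻¹ * ⟪x, w k⟫_ℝ ^ 2)) := by
    refine Summable.of_nonneg_of_le
      (fun k => mul_nonneg (hlam k) (by positivity))
      (fun k => mul_le_mul_of_nonneg_right (hlamle k) (by positivity))
      (((hbsum.mul_left (L * ((‖x‖ : ℝ) ^ 2)⁻¹)).congr fun k => by ring))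
  set Q : ℝ := ∑' k, lam k * (((‖x‖ : ℝ) ^ 2)⁻¹ * ⟪x, w k⟫_ℝ ^ 2) with hQdef
  have hQ0 : 0 ≤ Q := tsum_nonneg fun k => mul_nonneg (hlam k) (by positivity)
  have hQle : Q ≤ L := by
    calc Q ≤ ∑' k, L * (((‖x‖ : ℝ) ^ 2)⁻¹ * ⟪x, w k⟫_ℝ ^ 2) := by
            refine Summable.tsum_le_tsum (fun k => ?_) hqsum
              (((hbsum.mul_left (L * ((‖x‖ : ℝ) ^ 2)⁻¹)).congr fun k => by ring))
            exact mul_le_mul_of_nonneg_right (hlamle k) (by positivity)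
      _ = L * ((‖x‖ : ℝ) ^ 2)⁻¹ * (∑' k, ⟪x, w k⟫_ℝ ^ 2) := by
            rw [← tsum_mul_left]; exact tsum_congr fun k => by ring
      _ ≤ L * ((‖x‖ : ℝ) ^ 2)⁻¹ * ‖x‖ ^ 2 :=
            mul_le_mul_of_nonneg_left hble (by positivity)
      _ = L := by field_simp
  have e1 : (∑' k, stmt13AlphaK w lam c α η x k * (‖x‖ ^ (-2 : ℝ) * ⟪x, w k⟫_ℝ))
      = (c ^ 2 * (η - α - η * α) * P) * Q := by
    rw [hQdef, ← tsum_mul_left]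
    refine tsum_congr fun k => ?_
    rw [stmt13AlphaK, hN2eq, ← hPdef]
    field_simp
  have e2 : (∑' k, stmt13BetaK w lam c α η x k)
      = (c ^ 2 * (α ^ 2 * η - α * η + 2 * α) * P) * Q + (-(c ^ 2 * α * P)) * T := by
    have hpt : ∀ k, stmt13BetaK w lam c α η x k
        = (c ^ 2 * (α ^ 2 * η - α * η + 2 * α) * P) *
            (lam k * (((‖x‖ : ℝ) ^ 2)⁻¹ * ⟪x, w k⟫_ℝ ^ 2))
          + (-(c ^ 2 * α * P)) * lam k := by
      intro k
      rw [stmt13BetaK, hN2eq, ← hPdef]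
      field_simp
      ring
    rw [tsum_congr hpt, Summable.tsum_add (hqsum.mul_left _) (hsum.mul_left _),
      tsum_mul_left, tsum_mul_left, hQdef, hT]
  have hs1 : ∀ k, ‖stmt13SigmaK w lam c α η x k‖ ^ 2
      = c ^ 2 * lam k * P * (‖x‖ ^ 2 + (α ^ 2 - 2 * α) * ⟪x, w k⟫_ℝ ^ 2) := by
    intro k
    rw [stmt13SigmaK, norm_smul, mul_pow, norm_sub_sq_real, real_inner_smul_right,
      norm_smul, hw.1 k, real_inner_comm, hN2eq]
    simp only [mul_pow, Real.norm_eq_abs, sq_abs, Real.sq_sqrt (hlam k)]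
    rw [hPn]
    field_simp
    ring
  have hs2 : ∀ k, ⟪x, stmt13SigmaK w lam c α η x k⟫_ℝ ^ 2
      = c ^ 2 * lam k * P * ‖x‖ ^ 2 * ((1 - α) ^ 2 * ⟪x, w k⟫_ℝ ^ 2) := by
    intro k
    rw [stmt13SigmaK, real_inner_smul_right, inner_sub_right, real_inner_smul_right,
      real_inner_self_eq_norm_sq, hN2eq, mul_pow, mul_pow, mul_pow,
      Real.sq_sqrt (hlam k), hPn]
    field_simp
  have e3 : (∑' k, ‖x‖ ^ (-2 : ℝ) *
        (‖stmt13SigmaK w lam c α η x k‖ ^ 2 -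
          2 * ‖x‖ ^ (-2 : ℝ) * ⟪x, stmt13SigmaK w lam c α η x k⟫_ℝ ^ 2))
      = (c ^ 2 * (-α ^ 2 + 2 * α - 2) * P) * Q + (c ^ 2 * P) * T := by
    have hpt : ∀ k, ‖x‖ ^ (-2 : ℝ) *
        (‖stmt13SigmaK w lam c α η x k‖ ^ 2 -
          2 * ‖x‖ ^ (-2 : ℝ) * ⟪x, stmt13SigmaK w lam c α η x k⟫_ℝ ^ 2)
        = (c ^ 2 * (-α ^ 2 + 2 * α - 2) * P) *
            (lam k * (((‖x‖ : ℝ) ^ 2)⁻¹ * ⟪x, w k⟫_ℝ ^ 2))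
          + (c ^ 2 * P) * lam k := by
      intro k
      rw [hs1 k, hs2 k, hN2eq]
      field_simp
      ring
    rw [tsum_congr hpt, Summable.tsum_add (hqsum.mul_left _) (hsum.mul_left _),
      tsum_mul_left, tsum_mul_left, hQdef, hT]
  rw [e1, e2, e3, hN2eq]
  have hfirst : ((‖x‖ : ℝ) ^ 2)⁻¹ * ⟪x, b⟫_ℝ ≤ g := by
    rw [real_inner_comm, inv_mul_le_iff₀ hn2]
    linarith [hg]
  have hP0 : 0 < P := Real.rpow_pos_of_pos hn _
  have hK0 : 0 ≤ (α - 1) ^ 2 * (η - 1) + (α - 1) := by nlinarith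
  have hKQ : ((α - 1) ^ 2 * (η - 1) + (α - 1)) * Q
      ≤ ((α - 1) ^ 2 * (η - 1) + (α - 1)) * L := mul_le_mul_of_nonneg_left hQle hK0
  have hc2P : (0 : ℝ) ≤ c ^ 2 * P / 2 := by positivity
  nlinarith [mul_le_mul_of_nonneg_left hKQ hc2P, hfirst]
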